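/- Let G be a graph obtained by attaching a path P = v1v2...vk with k ≥ 3 to a cycle C, where v1 is adjacent to x and vk is adjacent to y for some (not necessarily distinct) vertices x, y of C. If G is not isomorphic to C_4·C_4 and not isomorphic to G_1, then G is configurable. -/

import Mathlib

open SimpleGraph

/-- `f` is a configuration on `G`. -/
def IsConfig {V : Type*} (G : SimpleGraph V) (f : V → Finset (Fin 5)) : Prop :=
  (∀ v, (f v).card = 2) ∧
  ∀ (v : V) (c : Fin 5), ∃ u, (u = v ∨ G.Adj u v) ∧ c ∈ f u

/-- A graph is configurable if it admits a configuration. -/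
def Configurable {V : Type*} (G : SimpleGraph V) : Prop :=
  ∃ f : V → Finset (Fin 5), IsConfig G f

/-- The graph `C₄·C₄`: two 4-cycles sharing exactly one vertex (the vertex `0`). -/
def C4C4 : SimpleGraph (Fin 7) :=
  SimpleGraph.fromEdgeSet {s(0,1), s(1,2), s(2,3), s(3,0), s(0,4), s(4,5), s(5,6), s(6,0)}

/-- Edges of the 7-cycle `w = 0, a1 = 1, a2 = 2, a3 = 3, b3 = 4, b2 = 5, b1 = 6`. -/
def cyc7Edges : Set (Sym2 (Fin 7)) := {s(0,1), s(1,2), s(2,3), s(3,4), s(4,5), s(5,6), s(6,0)}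

/-- `G₁`: the 7-cycle plus the chord `a2 b2`. -/
def Graph1 : SimpleGraph (Fin 7) := SimpleGraph.fromEdgeSet (cyc7Edges ∪ {s(2,5)})

/-- The graph obtained from the `n`-cycle on `ZMod n` (with `a` adjacent to `a + 1`)
by attaching a path `v_1 … v_k` (on `Fin k`), where `v_1` is joined to the cycle
vertex `x` and `v_k` is joined to the cycle vertex `y`. -/
def cycleAttachPath (n k : ℕ) (x y : ZMod n) : SimpleGraph (ZMod n ⊕ Fin k) :=
  SimpleGraph.fromEdgeSet
    ({e | ∃ a : ZMod n, e = s(Sum.inl a, Sum.inl (a + 1))} ∪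
     {e | ∃ i : ℕ, ∃ h : i + 1 < k,
        e = s(Sum.inr ⟨i, Nat.lt_of_succ_lt h⟩, Sum.inr ⟨i + 1, h⟩)} ∪
     {e | ∃ h : 0 < k, e = s(Sum.inl x, Sum.inr ⟨0, h⟩)} ∪
     {e | ∃ h : 0 < k, e = s(Sum.inl y, Sum.inr ⟨k - 1, by omega⟩)})

/-!
For `x ≠ y` the graph is a theta graph: three paths from `x` to `y`, of lengths `d`, `n - d` and
`k + 1`; for `x = y` it is two cycles through `x`. A configuration is a labelling of these paths by
2-subsets of `Fin 5` in which every three consecutive labels cover `Fin 5`, plus a covering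
condition at the branch vertices, which only involves the labels at and next to the ends of the
paths.

Among three consecutive 2-sets covering `Fin 5` two consecutive ones `u, v` are disjoint, and
`…, u, v, …` can be replaced by `…, u, v, w, u, v, …` with `w ⊇ univ \ (u ∪ v)`. This lengthens a
labelled path by 3 without touching the labels at and next to its ends, so three labelled paths of
consecutive lengths give all longer ones, and the branch conditions become a finite check.
-/

open Finset

def CoversInterior : List (Finset (Fin 5)) → Prop
  | a :: b :: c :: l => a ∪ b ∪ c = univ ∧ CoversInterior (b :: c :: l)
  | _ => True

instance decidableCoversInterior : DecidablePred CoversInterior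
  | _ :: b :: c :: l =>
    haveI := decidableCoversInterior (b :: c :: l)
    inferInstanceAs (Decidable (_ ∧ _))
  | [] | [_] | [_, _] => isTrue trivial

namespace CoversInterior

theorem of_append_left {l₁ l₂ : List (Finset (Fin 5))} (h : CoversInterior (l₁ ++ l₂)) :
    CoversInterior l₁ := by
  induction l₁ with
  | nil => trivial
  | cons a l ih =>
    match l, l₂, h, ih with
    | [], _, _, _ | [_], _, _, _ => trivial
    | b :: c :: l, _, h, ih => exact ⟨h.1, ih h.2⟩

theorem of_append_right {l₁ l₂ : List (Finset (Fin 5))} (h : CoversInterior (l₁ ++ l₂)) :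
    CoversInterior l₂ := by
  induction l₁ with
  | nil => exact h
  | cons a l ih =>
    apply ih
    match l, l₂, h with
    | [], [], _ | [], [_], _ | [_], [], _ => trivial
    | [], _ :: _ :: _, h | [_], _ :: _, h | _ :: _ :: _, _, h => exact h.2

theorem glue {l₁ l₂ : List (Finset (Fin 5))} {u v : Finset (Fin 5)}
    (h₁ : CoversInterior (l₁ ++ [u, v])) (h₂ : CoversInterior (u :: v :: l₂)) :
    CoversInterior (l₁ ++ u :: v :: l₂) := by
  induction l₁ with
  | nil => exact h₂
  | cons a l ih =>
    match l, h₁, ih with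
    | [], h₁, _ => exact ⟨h₁.1, h₂⟩
    | [b], h₁, ih => exact ⟨h₁.1, ih h₁.2⟩
    | b :: c :: l, h₁, ih => exact ⟨h₁.1, ih h₁.2⟩

theorem getD {l : List (Finset (Fin 5))} (h : CoversInterior l) {i : ℕ}
    (hi : i + 2 < l.length) : l.getD i ∅ ∪ l.getD (i + 1) ∅ ∪ l.getD (i + 2) ∅ = univ := by
  induction i generalizing l with
  | zero =>
    match l, h, hi with
    | a :: b :: c :: l, h, _ => exact h.1
  | succ i ih =>
    match l, h, hi with
    | a :: b :: c :: l, h, hi => exact ih h.2 (by simp at hi ⊢; omega)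

end CoversInterior

def IsPathConfig (l : List (Finset (Fin 5))) : Prop :=
  (∀ s ∈ l, #s = 2) ∧ CoversInterior l

instance : DecidablePred IsPathConfig := fun _ => inferInstanceAs (Decidable (_ ∧ _))

theorem disjoint_or_disjoint_of_union_eq_univ {a b c : Finset (Fin 5)} (ha : #a = 2)
    (hb : #b = 2) (hc : #c = 2) (h : a ∪ b ∪ c = univ) : Disjoint a b ∨ Disjoint b c := by
  by_contra! hne
  obtain ⟨hab, hbc⟩ := hne
  have h₁ : 1 ≤ #(a ∩ b) := card_pos.2 (not_disjoint_iff_nonempty_inter.1 hab)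
  have h₂ : 1 ≤ #((a ∪ b) ∩ c) :=
    card_pos.2 ((not_disjoint_iff_nonempty_inter.1 hbc).mono
      (inter_subset_inter_right subset_union_right))
  have h₃ := card_union_add_card_inter a b
  have h₄ := card_union_add_card_inter (a ∪ b) c
  rw [h, card_univ, Fintype.card_fin] at h₄
  omega

theorem exists_union_eq_univ_of_disjoint {u v : Finset (Fin 5)} (hu : #u = 2) (hv : #v = 2)
    (huv : Disjoint u v) : ∃ w, #w = 2 ∧ u ∪ v ∪ w = univ := by
  obtain ⟨m, hm⟩ : ∃ m, m ∉ u ∪ v := by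
    by_contra! h
    have := card_le_card (show univ ⊆ u ∪ v from fun m _ => h m)
    rw [card_union_of_disjoint huv, card_univ, Fintype.card_fin] at this
    omega
  obtain ⟨z, hz⟩ := card_pos.1 (hu.symm ▸ two_pos : 0 < #u)
  have hmz : m ≠ z := by rintro rfl; exact hm (mem_union_left _ hz)
  refine ⟨{m, z}, card_pair hmz, eq_univ_of_card _ (le_antisymm (card_le_univ _) ?_)⟩
  calc Fintype.card (Fin 5) = #(insert m (u ∪ v)) := by
        rw [card_insert_of_notMem hm, card_union_of_disjoint huv, hu, hv]; rfl
    _ ≤ #(u ∪ v ∪ {m, z}) := card_le_card (by intro t; simp; tauto)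

namespace IsPathConfig

theorem exists_eq_append_disjoint {l : List (Finset (Fin 5))} (h : IsPathConfig l)
    (hl : 3 ≤ l.length) : ∃ l₁ u v l₂, l = l₁ ++ u :: v :: l₂ ∧ Disjoint u v := by
  match l, h, hl with
  | a :: b :: c :: l, ⟨hcard, hcov⟩, _ =>
    rcases disjoint_or_disjoint_of_union_eq_univ (hcard a (by simp)) (hcard b (by simp))
      (hcard c (by simp)) hcov.1 with hab | hbc
    · exact ⟨[], a, b, c :: l, rfl, hab⟩
    · exact ⟨[a], b, c, l, rfl, hbc⟩

theorem pump {l₁ l₂ : List (Finset (Fin 5))} {u v : Finset (Fin 5)}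
    (h : IsPathConfig (l₁ ++ u :: v :: l₂)) (huv : Disjoint u v) :
    ∃ w, IsPathConfig (l₁ ++ u :: v :: w :: u :: v :: l₂) := by
  obtain ⟨hcard, hcov⟩ := h
  obtain ⟨w, hw, huvw⟩ := exists_union_eq_univ_of_disjoint (hcard u (by simp))
    (hcard v (by simp)) huv
  refine ⟨w, fun s hs => ?_, ?_⟩
  · simp only [List.mem_append, List.mem_cons] at hs
    rcases hs with hs | rfl | rfl | rfl | rfl | rfl | hs
    all_goals first | exact hw | exact hcard _ (by simp [*])
  · have hloop : CoversInterior ([u, v, w] ++ [u, v]) :=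
      ⟨huvw, by rw [← huvw]; ac_rfl, by rw [← huvw]; ac_rfl, trivial⟩
    have hsuffix : CoversInterior (u :: v :: l₂) := hcov.of_append_right
    have hprefix : CoversInterior (l₁ ++ [u, v]) := by
      have : l₁ ++ u :: v :: l₂ = (l₁ ++ [u, v]) ++ l₂ := by simp
      exact (this ▸ hcov).of_append_left
    exact hprefix.glue (hloop.glue hsuffix)

theorem card_getD {l : List (Finset (Fin 5))} (h : IsPathConfig l) {i : ℕ}
    (hi : i < l.length) : #(l.getD i ∅) = 2 := by
  rw [List.getD_eq_getElem _ _ hi]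
  exact h.1 _ (List.getElem_mem hi)

end IsPathConfig

/-- The path with `L` edges has a configuration with labels `a`, `c`, …, `e`, `b` (for `L = 1`
this forces `c = b` and `e = a`). -/
def HasPathConfig (L : ℕ) (a c e b : Finset (Fin 5)) : Prop :=
  ∃ l : List (Finset (Fin 5)), l.length = L + 1 ∧ IsPathConfig l ∧
    l.getD 0 ∅ = a ∧ l.getD 1 ∅ = c ∧ l.getD (L - 1) ∅ = e ∧ l.getD L ∅ = b

theorem Nat.le_induction_three {P : ℕ → Prop} {m : ℕ} (h₀ : P m) (h₁ : P (m + 1))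
    (h₂ : P (m + 2)) (step : ∀ n ≥ m, P n → P (n + 3)) : ∀ n ≥ m, P n := by
  intro n hn
  induction n using Nat.strong_induction_on with
  | _ n ih =>
    by_cases h : n < m + 3
    · obtain ⟨r, rfl⟩ := Nat.exists_eq_add_of_le hn
      obtain rfl | rfl | rfl : r = 0 ∨ r = 1 ∨ r = 2 := by omega
      exacts [h₀, h₁, h₂]
    · obtain ⟨n, rfl⟩ : ∃ j, n = j + 3 := ⟨n - 3, by omega⟩
      exact step n (by omega) (ih n (by omega) (by omega))

section Pump

variable {α : Type*} (l₁ l₂ : List α) (u v w d : α)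

theorem List.getD_pump_of_le_succ_length {i : ℕ} (hi : i ≤ l₁.length + 1) :
    (l₁ ++ u :: v :: w :: u :: v :: l₂).getD i d = (l₁ ++ u :: v :: l₂).getD i d := by
  induction l₁ generalizing i with
  | nil =>
    simp only [List.length_nil] at hi
    interval_cases i <;> rfl
  | cons a l ih =>
    cases i with
    | zero => rfl
    | succ i => exact ih (by simp at hi; omega)

theorem List.getD_pump_add_three {i : ℕ} (hi : l₁.length ≤ i) :
    (l₁ ++ u :: v :: w :: u :: v :: l₂).getD (i + 3) d = (l₁ ++ u :: v :: l₂).getD i d := by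
  induction l₁ generalizing i with
  | nil => rfl
  | cons a l ih =>
    obtain ⟨i, rfl⟩ : ∃ j, i = j + 1 := ⟨i - 1, by simp at hi; omega⟩
    exact ih (by simp at hi; omega)

end Pump

namespace HasPathConfig

variable {L : ℕ} {a c e b : Finset (Fin 5)}

theorem add_three (h : HasPathConfig L a c e b) (hL : 2 ≤ L) :
    HasPathConfig (L + 3) a c e b := by
  obtain ⟨l, hlen, hl, ha, hc, he, hb⟩ := h
  obtain ⟨l₁, u, v, l₂, rfl, huv⟩ := hl.exists_eq_append_disjoint (by omega)
  obtain ⟨w, hw⟩ := hl.pump huv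
  simp only [List.length_append, List.length_cons] at hlen
  refine ⟨_, by simp; omega, hw, ?_, ?_, ?_, ?_⟩
  · rwa [List.getD_pump_of_le_succ_length _ _ _ _ _ _ (by omega)]
  · rwa [List.getD_pump_of_le_succ_length _ _ _ _ _ _ (by omega)]
  · rwa [show L + 3 - 1 = L - 1 + 3 by omega, List.getD_pump_add_three _ _ _ _ _ _ (by omega)]
  · rwa [List.getD_pump_add_three _ _ _ _ _ _ (by omega)]

theorem of_three {L₀ : ℕ} (hL₀ : 2 ≤ L₀)
    (h₀ : HasPathConfig L₀ a c e b) (h₁ : HasPathConfig (L₀ + 1) a c e b)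
    (h₂ : HasPathConfig (L₀ + 2) a c e b) : ∀ L ≥ L₀, HasPathConfig L a c e b :=
  Nat.le_induction_three h₀ h₁ h₂ fun _ hL h => h.add_three (by omega)

end HasPathConfig

section CycleAttachPath

variable {n k : ℕ} {x y : ZMod n}

theorem cycleAttachPath_adj_inl_add_one (hn : 1 < n) (z : ZMod n) :
    (cycleAttachPath n k x y).Adj (.inl z) (.inl (z + 1)) := by
  have : Fact (1 < n) := ⟨hn⟩
  refine (fromEdgeSet_adj _).2 ⟨.inl (.inl (.inl ⟨z, rfl⟩)), ?_⟩
  simp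

theorem cycleAttachPath_adj_inl_inr_zero (hk : 0 < k) :
    (cycleAttachPath n k x y).Adj (.inl x) (.inr ⟨0, hk⟩) :=
  (fromEdgeSet_adj _).2 ⟨.inl (.inr ⟨hk, rfl⟩), by simp⟩

theorem cycleAttachPath_adj_inl_inr_last (hk : 0 < k) :
    (cycleAttachPath n k x y).Adj (.inl y) (.inr ⟨k - 1, by omega⟩) :=
  (fromEdgeSet_adj _).2 ⟨.inr ⟨hk, rfl⟩, by simp⟩

theorem cycleAttachPath_adj_inr_succ {i : ℕ} (hi : i + 1 < k) :
    (cycleAttachPath n k x y).Adj (.inr ⟨i, by omega⟩) (.inr ⟨i + 1, hi⟩) :=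
  (fromEdgeSet_adj _).2 ⟨.inl (.inl (.inr ⟨i, hi, rfl⟩)), by simp⟩

theorem cycleAttachPath_adj_iff (hk : 0 < k) (u v : ZMod n ⊕ Fin k) :
    (cycleAttachPath n k x y).Adj u v ↔ u ≠ v ∧
      ((∃ a : ZMod n, s(u, v) = s(.inl a, .inl (a + 1))) ∨
        (∃ i : Fin k, ∃ h : (i : ℕ) + 1 < k, s(u, v) = s(.inr i, .inr ⟨i + 1, h⟩)) ∨
        s(u, v) = s(.inl x, .inr ⟨0, hk⟩) ∨ s(u, v) = s(.inl y, .inr ⟨k - 1, by omega⟩)) := by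
  rw [cycleAttachPath, fromEdgeSet_adj, and_comm]
  refine and_congr_right fun _ => ?_
  simp only [Set.mem_union, Set.mem_ofPred_eq]
  constructor
  · rintro (((h | ⟨i, hi, h⟩) | ⟨_, h⟩) | ⟨_, h⟩)
    exacts [.inl h, .inr (.inl ⟨⟨i, by omega⟩, hi, h⟩), .inr (.inr (.inl h)), .inr (.inr (.inr h))]
  · rintro (h | ⟨i, hi, h⟩ | h | h)
    exacts [.inl (.inl (.inl h)), .inl (.inl (.inr ⟨i, hi, h⟩)), .inl (.inr ⟨hk, h⟩), .inr ⟨hk, h⟩]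

end CycleAttachPath

theorem ZMod.val_add_one_of_one_lt {n : ℕ} (hn : 1 < n) (z : ZMod n) :
    (z + 1).val = (z.val + 1) % n := by
  have : Fact (1 < n) := ⟨hn⟩
  rw [ZMod.val_add, ZMod.val_one]

theorem ZMod.val_sub_one_of_one_lt {n : ℕ} (hn : 1 < n) (z : ZMod n) :
    (z - 1).val = if z.val = 0 then n - 1 else z.val - 1 := by
  have : NeZero n := ⟨by omega⟩
  have h := ZMod.val_add_one_of_one_lt hn (z - 1)
  rw [sub_add_cancel] at h
  have := ZMod.val_lt (z - 1)
  obtain h' | h' : (z - 1).val + 1 < n ∨ (z - 1).val + 1 = n := by omega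
  · rw [Nat.mod_eq_of_lt h'] at h
    rw [if_neg (by omega)]
    omega
  · rw [h', Nat.mod_self] at h
    rw [if_pos h]
    omega

section Labels

variable {n k d : ℕ} {x : ZMod n} {γ σ : ℕ → Finset (Fin 5)}

def attachLabels (x : ZMod n) (γ σ : ℕ → Finset (Fin 5)) : ZMod n ⊕ Fin k → Finset (Fin 5) :=
  Sum.elim (fun z => γ (z - x).val) fun i => σ (i + 1)

theorem exists_mem_attachLabels_inl (hn : 1 < n) (hk : 0 < k) (hγn : γ n = γ 0)
    (hcycle : ∀ t < n, univ ⊆ γ (if t = 0 then n - 1 else t - 1) ∪ γ t ∪ γ (t + 1) ∪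
      (if t = 0 then σ 1 else ∅) ∪ (if t = d then σ k else ∅)) (z : ZMod n) (c : Fin 5) :
    ∃ u, (u = .inl z ∨ (cycleAttachPath n k x (x + d)).Adj u (.inl z)) ∧
      c ∈ attachLabels x γ σ u := by
  have : NeZero n := ⟨by omega⟩
  have hc := hcycle _ (ZMod.val_lt (z - x)) (mem_univ c)
  simp only [mem_union] at hc
  rcases hc with (((hc | hc) | hc) | hc) | hc
  · refine ⟨.inl (z - 1), .inr (by simpa using cycleAttachPath_adj_inl_add_one hn (z - 1)), ?_⟩
    rwa [attachLabels, Sum.elim_inl, sub_right_comm, ZMod.val_sub_one_of_one_lt hn]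
  · exact ⟨.inl z, .inl rfl, hc⟩
  · refine ⟨.inl (z + 1), .inr (cycleAttachPath_adj_inl_add_one hn z).symm, ?_⟩
    rw [attachLabels, Sum.elim_inl, add_sub_right_comm, ZMod.val_add_one_of_one_lt hn]
    obtain h | h : (z - x).val + 1 < n ∨ (z - x).val + 1 = n := by
      have := ZMod.val_lt (z - x); omega
    · rwa [Nat.mod_eq_of_lt h]
    · rwa [h, Nat.mod_self, ← hγn, ← h]
  · split_ifs at hc with h
    · obtain rfl : z = x := sub_eq_zero.1 ((ZMod.val_eq_zero _).1 h)
      exact ⟨.inr ⟨0, hk⟩, .inr (cycleAttachPath_adj_inl_inr_zero hk).symm, hc⟩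
    · exact absurd hc (notMem_empty c)
  · split_ifs at hc with h
    · obtain rfl : z = x + d := by
        rw [← sub_add_cancel z x, add_comm, ← h, ZMod.natCast_zmod_val]
      refine ⟨.inr ⟨k - 1, by omega⟩, .inr (cycleAttachPath_adj_inl_inr_last hk).symm, ?_⟩
      rwa [attachLabels, Sum.elim_inr, Nat.sub_add_cancel hk]
    · exact absurd hc (notMem_empty c)

theorem exists_mem_attachLabels_inr (hd : d < n) (hσ₀ : σ 0 = γ 0) (hσk : σ (k + 1) = γ d)
    (hpath : ∀ i < k, σ i ∪ σ (i + 1) ∪ σ (i + 2) = univ) (i : Fin k) (c : Fin 5) :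
    ∃ u, (u = .inr i ∨ (cycleAttachPath n k x (x + d)).Adj u (.inr i)) ∧
      c ∈ attachLabels x γ σ u := by
  have : NeZero n := ⟨by omega⟩
  have hk : 0 < k := i.pos
  have hc : c ∈ σ i ∪ σ (i + 1) ∪ σ (i + 2) := hpath i i.isLt ▸ mem_univ c
  simp only [mem_union] at hc
  rcases hc with (hc | hc) | hc
  · rcases Nat.eq_zero_or_pos i.val with h | h
    · refine ⟨.inl x, .inr ?_, ?_⟩
      · rw [show i = ⟨0, hk⟩ from Fin.ext h]
        exact cycleAttachPath_adj_inl_inr_zero hk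
      · rwa [attachLabels, Sum.elim_inl, sub_self, ZMod.val_zero, ← hσ₀, ← h]
    · refine ⟨.inr ⟨i - 1, by omega⟩, .inr ?_, ?_⟩
      · convert cycleAttachPath_adj_inr_succ (n := n) (x := x) (y := x + d)
          (show i.val - 1 + 1 < k by omega) using 2
        ext
        simp only
        omega
      · rwa [attachLabels, Sum.elim_inr, Nat.sub_add_cancel h]
  · exact ⟨.inr i, .inl rfl, hc⟩
  · by_cases h : i.val + 1 = k
    · refine ⟨.inl (x + d), .inr ?_, ?_⟩
      · rw [show i = ⟨k - 1, by omega⟩ from Fin.ext (by simp only; omega)]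
        exact cycleAttachPath_adj_inl_inr_last hk
      · rwa [attachLabels, Sum.elim_inl, add_sub_cancel_left, ZMod.val_cast_of_lt hd, ← hσk,
          ← h]
    · exact ⟨.inr ⟨i + 1, by omega⟩, .inr (cycleAttachPath_adj_inr_succ (by omega)).symm, hc⟩

/-- `γ t` labels the cycle vertex `x + t` and `σ (i + 1)` the path vertex `v_i`; `σ 0` and
`σ (k + 1)` stand for the labels of the ends `x` and `x + d` of the path. -/
theorem configurable_cycleAttachPath_of_labels (hn : 1 < n) (hk : 0 < k) (hd : d < n)
    (x : ZMod n) (γ σ : ℕ → Finset (Fin 5))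
    (hγ : ∀ t < n, #(γ t) = 2) (hσ : ∀ i < k, #(σ (i + 1)) = 2)
    (hγn : γ n = γ 0) (hσ₀ : σ 0 = γ 0) (hσk : σ (k + 1) = γ d)
    (hcycle : ∀ t < n, univ ⊆ γ (if t = 0 then n - 1 else t - 1) ∪ γ t ∪ γ (t + 1) ∪
      (if t = 0 then σ 1 else ∅) ∪ (if t = d then σ k else ∅))
    (hpath : ∀ i < k, σ i ∪ σ (i + 1) ∪ σ (i + 2) = univ) :
    Configurable (cycleAttachPath n k x (x + d)) := by
  have : NeZero n := ⟨by omega⟩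
  refine ⟨attachLabels x γ σ, fun v => ?_, fun v c => ?_⟩ <;> rcases v with z | i
  · exact hγ _ (ZMod.val_lt _)
  · exact hσ _ i.isLt
  · exact exists_mem_attachLabels_inl hn hk hγn hcycle z c
  · exact exists_mem_attachLabels_inr hd hσ₀ hσk hpath i c

end Labels

/-- For `0 < d` the graph consists of three paths of lengths `d`, `n - d`, `k + 1` from `x` to
`x + d`. -/
theorem configurable_theta {n k d : ℕ} (hk : 0 < k) (hd : 0 < d) (hdn : d < n) (x : ZMod n)
    {a b c₁ c₂ c₃ e₁ e₂ e₃ : Finset (Fin 5)} (h₁ : HasPathConfig d a c₁ e₁ b)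
    (h₂ : HasPathConfig (n - d) a c₂ e₂ b) (h₃ : HasPathConfig (k + 1) a c₃ e₃ b)
    (hx : univ ⊆ a ∪ c₁ ∪ c₂ ∪ c₃) (hy : univ ⊆ b ∪ e₁ ∪ e₂ ∪ e₃) :
    Configurable (cycleAttachPath n k x (x + d)) := by
  obtain ⟨l₁, len₁, hl₁, a₁, c₁_eq, e₁_eq, b₁⟩ := h₁
  obtain ⟨l₂, len₂, hl₂, a₂, c₂_eq, e₂_eq, b₂⟩ := h₂
  obtain ⟨l₃, len₃, hl₃, a₃, c₃_eq, e₃_eq, b₃⟩ := h₃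
  set γ : ℕ → Finset (Fin 5) := fun t => if t ≤ d then l₁.getD t ∅ else l₂.getD (n - t) ∅
  have hγ₁ {t : ℕ} (ht : t ≤ d) : γ t = l₁.getD t ∅ := if_pos ht
  have hγ₂ {t : ℕ} (ht : d ≤ t) : γ t = l₂.getD (n - t) ∅ := by
    rcases ht.lt_or_eq with ht | rfl
    · exact if_neg (by omega)
    · rw [hγ₁ le_rfl, b₁, b₂]
  refine configurable_cycleAttachPath_of_labels (by omega) hk hdn x γ (l₃.getD · ∅)
    (fun t ht => ?_) (fun i hi => hl₃.card_getD (by omega))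
    (by rw [hγ₂ hdn.le, hγ₁ (Nat.zero_le _), Nat.sub_self, a₁, a₂])
    (by rw [hγ₁ (Nat.zero_le _), a₁, a₃]) (by rw [hγ₁ le_rfl, b₁, b₃]) (fun t ht => ?_)
    (fun i hi => hl₃.2.getD (by omega))
  · rcases le_or_gt t d with htd | htd
    · rw [hγ₁ htd]; exact hl₁.card_getD (by omega)
    · rw [hγ₂ htd.le]; exact hl₂.card_getD (by omega)
  rcases Nat.eq_zero_or_pos t with rfl | ht₀
  · simp only [if_pos, if_neg hd.ne]
    rw [hγ₂ (by omega), hγ₁ (Nat.zero_le _), hγ₁ hd, show n - (n - 1) = 1 by omega]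
    refine hx.trans fun c hc => ?_
    simp only [mem_union, ← a₁, ← c₁_eq, ← c₂_eq, ← c₃_eq] at hc ⊢
    tauto
  simp only [ht₀.ne', if_false, union_empty]
  rcases lt_trichotomy t d with htd | rfl | htd
  · rw [if_neg htd.ne, union_empty, hγ₁ (by omega), hγ₁ htd.le, hγ₁ htd,
      ← hl₁.2.getD (i := t - 1) (by omega), Nat.sub_add_cancel ht₀,
      show t - 1 + 2 = t + 1 by omega]
  · rw [if_pos rfl, hγ₁ (by omega), hγ₁ le_rfl, hγ₂ (by omega),
      show n - (t + 1) = n - t - 1 by omega]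
    refine hy.trans fun c hc => ?_
    simp only [mem_union, ← b₁, ← e₁_eq, ← e₂_eq, ← e₃_eq] at hc ⊢
    tauto
  · have hm := hl₂.2.getD (i := n - t - 1) (by omega)
    rw [show n - t - 1 + 1 = n - t by omega, show n - t - 1 + 2 = n - (t - 1) by omega] at hm
    rw [if_neg htd.ne', union_empty, hγ₂ (by omega), hγ₂ htd.le, hγ₂ (by omega),
      show n - (t + 1) = n - t - 1 by omega, ← hm]
    intro c
    simp only [mem_union]
    tauto

/-- For `x = y` the graph consists of two cycles of lengths `n` and `k + 1` through `x`. -/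
theorem configurable_figureEight {n k : ℕ} (hn : 1 < n) (hk : 0 < k) (x : ZMod n)
    {a c₁ c₂ e₁ e₂ : Finset (Fin 5)} (h₁ : HasPathConfig n a c₁ e₁ a)
    (h₂ : HasPathConfig (k + 1) a c₂ e₂ a) (hx : univ ⊆ a ∪ c₁ ∪ e₁ ∪ c₂ ∪ e₂) :
    Configurable (cycleAttachPath n k x x) := by
  obtain ⟨l₁, len₁, hl₁, a₁, c₁_eq, e₁_eq, b₁⟩ := h₁
  obtain ⟨l₂, len₂, hl₂, a₂, c₂_eq, e₂_eq, b₂⟩ := h₂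
  have := configurable_cycleAttachPath_of_labels hn hk (d := 0) (by omega) x (l₁.getD · ∅)
    (l₂.getD · ∅) (fun t ht => hl₁.card_getD (by omega)) (fun i hi => hl₂.card_getD (by omega))
    (by rw [a₁, b₁]) (by rw [a₁, a₂]) (by rw [a₁, b₂]) (fun t ht => ?_)
    (fun i hi => hl₂.2.getD (by omega))
  · simpa using this
  rcases Nat.eq_zero_or_pos t with rfl | ht₀
  · simp only [if_pos]
    refine hx.trans fun c hc => ?_
    simp only [mem_union, ← a₁, ← c₁_eq, ← e₁_eq, ← c₂_eq, ← e₂_eq, Nat.add_sub_cancel] at hc ⊢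
    tauto
  · simp only [ht₀.ne', if_false, union_empty]
    rw [← hl₁.2.getD (i := t - 1) (by omega), Nat.sub_add_cancel ht₀,
      show t - 1 + 2 = t + 1 by omega]

theorem apply_eq_apply_min_five {α : Type*} (f : ℕ → α) (hf : ∀ L, f (L + 5) = f 5) (L : ℕ) :
    f L = f (min L 5) := by
  rcases le_or_gt 5 L with h | h
  · obtain ⟨m, rfl⟩ := Nat.exists_eq_add_of_le' h
    rw [min_eq_right h, hf]
  · rw [min_eq_left h.le]

/-- Labels next to `x` and next to `y` on the three `x`–`y` paths of a theta graph, when `x` is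
labelled `{0, 1}` and `y` is labelled `{1, 2}`: the shorter and the longer arc of the cycle and the
attached path. They were found by a computer search and do not change from length 5 on. -/
def shortArcEnds : ℕ → Finset (Fin 5) × Finset (Fin 5)
  | 1 => ({1, 2}, {0, 1})
  | 2 => ({3, 4}, {3, 4})
  | 3 => ({2, 3}, {0, 4})
  | 4 => ({0, 2}, {0, 1})
  | _ => ({3, 4}, {0, 3})

def longArcEnds : ℕ → Finset (Fin 5) × Finset (Fin 5)
  | 2 => ({3, 4}, {3, 4})
  | 3 => ({2, 4}, {0, 3})
  | 4 => ({2, 3}, {0, 3})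
  | _ => ({2, 3}, {3, 4})

def pathEnds : ℕ → Finset (Fin 5) × Finset (Fin 5)
  | 4 => ({1, 4}, {0, 4})
  | _ => ({3, 4}, {0, 4})

theorem hasPathConfig_shortArc :
    ∀ L, 1 ≤ L → HasPathConfig L {0, 1} (shortArcEnds L).1 (shortArcEnds L).2 {1, 2}
  | 1, _ => ⟨[{0, 1}, {1, 2}], by decide⟩
  | 2, _ => ⟨[{0, 1}, {3, 4}, {1, 2}], by decide⟩
  | 3, _ => ⟨[{0, 1}, {2, 3}, {0, 4}, {1, 2}], by decide⟩
  | 4, _ => ⟨[{0, 1}, {0, 2}, {3, 4}, {0, 1}, {1, 2}], by decide⟩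
  | L + 5, _ => HasPathConfig.of_three (L₀ := 5) (c := {3, 4}) (e := {0, 3}) (by norm_num)
      ⟨[{0, 1}, {3, 4}, {0, 2}, {1, 4}, {0, 3}, {1, 2}], by decide⟩
      ⟨[{0, 1}, {3, 4}, {0, 2}, {1, 2}, {3, 4}, {0, 3}, {1, 2}], by decide⟩
      ⟨[{0, 1}, {3, 4}, {1, 2}, {0, 3}, {1, 4}, {2, 4}, {0, 3}, {1, 2}], by decide⟩
      (L + 5) (by omega)

theorem hasPathConfig_longArc :
    ∀ L, 2 ≤ L → HasPathConfig L {0, 1} (longArcEnds L).1 (longArcEnds L).2 {1, 2}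
  | 2, _ => ⟨[{0, 1}, {3, 4}, {1, 2}], by decide⟩
  | 3, _ => ⟨[{0, 1}, {2, 4}, {0, 3}, {1, 2}], by decide⟩
  | 4, _ => ⟨[{0, 1}, {2, 3}, {1, 4}, {0, 3}, {1, 2}], by decide⟩
  | L + 5, _ => HasPathConfig.of_three (L₀ := 5) (c := {2, 3}) (e := {3, 4}) (by norm_num)
      ⟨[{0, 1}, {2, 3}, {1, 4}, {0, 2}, {3, 4}, {1, 2}], by decide⟩
      ⟨[{0, 1}, {2, 3}, {0, 4}, {1, 2}, {0, 3}, {3, 4}, {1, 2}], by decide⟩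
      ⟨[{0, 1}, {2, 3}, {0, 4}, {1, 3}, {1, 2}, {0, 4}, {3, 4}, {1, 2}], by decide⟩
      (L + 5) (by omega)

theorem hasPathConfig_path :
    ∀ L, 4 ≤ L → HasPathConfig L {0, 1} (pathEnds L).1 (pathEnds L).2 {1, 2}
  | 4, _ => ⟨[{0, 1}, {1, 4}, {2, 3}, {0, 4}, {1, 2}], by decide⟩
  | L + 5, _ => HasPathConfig.of_three (L₀ := 5) (c := {3, 4}) (e := {0, 4}) (by norm_num)
      ⟨[{0, 1}, {3, 4}, {0, 2}, {1, 3}, {0, 4}, {1, 2}], by decide⟩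
      ⟨[{0, 1}, {3, 4}, {0, 2}, {1, 2}, {3, 4}, {0, 4}, {1, 2}], by decide⟩
      ⟨[{0, 1}, {3, 4}, {1, 2}, {0, 3}, {1, 4}, {2, 3}, {0, 4}, {1, 2}], by decide⟩
      (L + 5) (by omega)

theorem theta_ends_cover {i j l : ℕ} (hi : 1 ≤ i) (hj : 2 ≤ j) (hij : i ≤ j) (hl : 4 ≤ l)
    (h22 : ¬(i = 2 ∧ j = 2)) (hG₁ : ¬(i = 1 ∧ j = 3 ∧ l = 4)) :
    univ ⊆ {0, 1} ∪ (shortArcEnds i).1 ∪ (longArcEnds j).1 ∪ (pathEnds l).1 ∧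
      univ ⊆ {1, 2} ∪ (shortArcEnds i).2 ∪ (longArcEnds j).2 ∪ (pathEnds l).2 := by
  have key : ∀ i ∈ Icc 1 5, ∀ j ∈ Icc 2 5, ∀ l ∈ Icc 4 5, i ≤ j → (i, j) ≠ (2, 2) →
      (i, j, l) ≠ (1, 3, 4) →
      univ ⊆ {0, 1} ∪ (shortArcEnds i).1 ∪ (longArcEnds j).1 ∪ (pathEnds l).1 ∧
        univ ⊆ {1, 2} ∪ (shortArcEnds i).2 ∪ (longArcEnds j).2 ∪ (pathEnds l).2 := by
    decide
  rw [apply_eq_apply_min_five shortArcEnds (fun _ => rfl) i,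
    apply_eq_apply_min_five longArcEnds (fun _ => rfl) j,
    apply_eq_apply_min_five pathEnds (fun _ => rfl) l]
  exact key _ (mem_Icc.2 ⟨by omega, by omega⟩) _ (mem_Icc.2 ⟨by omega, by omega⟩) _
    (mem_Icc.2 ⟨by omega, by omega⟩) (by omega) (by simp; omega) (by simp; omega)

theorem exists_hasPathConfig_two_three :
    ∀ L ≥ 4, ∃ e, HasPathConfig L {0, 1} {2, 3} e {2, 3} :=
  Nat.le_induction_three ⟨{0, 1}, [{0, 1}, {2, 3}, {0, 4}, {0, 1}, {2, 3}], by decide⟩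
    ⟨{2, 4}, [{0, 1}, {2, 3}, {3, 4}, {0, 1}, {2, 4}, {2, 3}], by decide⟩
    ⟨{0, 1}, [{0, 1}, {2, 3}, {0, 4}, {1, 2}, {3, 4}, {0, 1}, {2, 3}], by decide⟩
    fun _ hL ⟨e, h⟩ => ⟨e, h.add_three (by omega)⟩

theorem configurable_cycleAttachPath_of_pos {n k d : ℕ} (hn : 3 ≤ n) (hk : 3 ≤ k) (hd : 0 < d)
    (hdn : d < n) (hG₁ : ¬(n = 4 ∧ k = 3 ∧ (d = 1 ∨ d = 3))) (x : ZMod n) :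
    Configurable (cycleAttachPath n k x (x + d)) := by
  -- With `y` labelled `{1, 2}` both arcs would have to be `{0, 1}, {3, 4}, {1, 2}`, which leaves
  -- too little freedom for the path; label `y` by `{2, 3}` instead.
  by_cases h22 : d = 2 ∧ n - d = 2
  · obtain ⟨rfl, h⟩ := h22
    obtain ⟨e, he⟩ := exists_hasPathConfig_two_three (k + 1) (by omega)
    refine configurable_theta (by omega) hd hdn x
      (⟨[{0, 1}, {0, 4}, {2, 3}], by decide⟩ : HasPathConfig 2 {0, 1} {0, 4} {0, 4} {2, 3})
      (h ▸ (⟨[{0, 1}, {1, 4}, {2, 3}], by decide⟩ : HasPathConfig 2 {0, 1} {1, 4} {1, 4} {2, 3}))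
      he (by decide) ((by decide : (univ : Finset (Fin 5)) ⊆ {2, 3} ∪ {0, 4} ∪ {1, 4}).trans
        subset_union_left)
  rcases le_total d (n - d) with h | h
  · obtain ⟨hx, hy⟩ := theta_ends_cover (i := d) (j := n - d) (l := k + 1) hd (by omega) h
      (by omega) (by omega) (by omega)
    exact configurable_theta (by omega) hd hdn x (hasPathConfig_shortArc d hd)
      (hasPathConfig_longArc _ (by omega)) (hasPathConfig_path _ (by omega)) hx hy
  · obtain ⟨hx, hy⟩ := theta_ends_cover (i := n - d) (j := d) (l := k + 1) (by omega) (by omega)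
      h (by omega) (by omega) (by omega)
    exact configurable_theta (by omega) hd hdn x (hasPathConfig_longArc d (by omega))
      (hasPathConfig_shortArc _ (by omega)) (hasPathConfig_path _ (by omega))
      (by rwa [union_right_comm {0, 1} (longArcEnds d).1])
      (by rwa [union_right_comm {1, 2} (longArcEnds d).2])

/-- Configurations of the cycle `C_L`, cut open at a vertex labelled `{0, 1}`. -/
theorem exists_cycle_config (L : ℕ) (h₃ : 3 ≤ L) (h₄ : L ≠ 4) (h₇ : L ≠ 7) :
    ∃ c e, {0, 1} ∪ c ∪ e = univ ∧ HasPathConfig L {0, 1} c e {0, 1} := by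
  induction L using Nat.strong_induction_on with
  | _ L ih =>
    by_cases hbase : L = 3 ∨ L = 5 ∨ L = 10
    · rcases hbase with rfl | rfl | rfl
      · exact ⟨{0, 2}, {3, 4}, by decide, [{0, 1}, {0, 2}, {3, 4}, {0, 1}], by decide⟩
      · exact ⟨{2, 3}, {3, 4}, by decide, [{0, 1}, {2, 3}, {0, 4}, {1, 2}, {3, 4}, {0, 1}],
          by decide⟩
      · exact ⟨{2, 3}, {3, 4}, by decide, [{0, 1}, {2, 3}, {0, 4}, {1, 2}, {3, 4}, {0, 1},
          {2, 3}, {0, 4}, {1, 2}, {3, 4}, {0, 1}], by decide⟩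
    · obtain ⟨c, e, hce, h⟩ := ih (L - 3) (by omega) (by omega) (by omega) (by omega)
      exact ⟨c, e, hce, Nat.sub_add_cancel (by omega : 3 ≤ L) ▸ h.add_three (by omega)⟩

theorem hasPathConfig_cycle_four : HasPathConfig 4 {0, 1} {0, 2} {1, 2} {0, 1} :=
  ⟨[{0, 1}, {0, 2}, {3, 4}, {1, 2}, {0, 1}], by decide⟩

theorem hasPathConfig_cycle_seven : HasPathConfig 7 {0, 1} {0, 3} {1, 4} {0, 1} :=
  ⟨[{0, 1}, {0, 3}, {2, 4}, {1, 3}, {0, 4}, {2, 3}, {1, 4}, {0, 1}], by decide⟩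

theorem hasPathConfig_cycle_seven' : HasPathConfig 7 {0, 1} {0, 2} {0, 2} {0, 1} :=
  ⟨[{0, 1}, {0, 2}, {3, 4}, {0, 1}, {1, 2}, {3, 4}, {0, 2}, {0, 1}], by decide⟩

theorem exists_hasPathConfig_cycle (L : ℕ) (h₃ : 3 ≤ L) :
    ∃ c e, HasPathConfig L {0, 1} c e {0, 1} := by
  by_cases h : L = 4 ∨ L = 7
  · rcases h with rfl | rfl
    exacts [⟨_, _, hasPathConfig_cycle_four⟩, ⟨_, _, hasPathConfig_cycle_seven⟩]
  · obtain ⟨c, e, -, h⟩ := exists_cycle_config L h₃ (by omega) (by omega)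
    exact ⟨c, e, h⟩

theorem configurable_cycleAttachPath_self {n k : ℕ} (hn : 3 ≤ n) (hk : 3 ≤ k)
    (hC₄C₄ : ¬(n = 4 ∧ k = 3)) (x : ZMod n) : Configurable (cycleAttachPath n k x x) := by
  by_cases hn' : n ≠ 4 ∧ n ≠ 7
  · obtain ⟨c₁, e₁, hce, h₁⟩ := exists_cycle_config n hn hn'.1 hn'.2
    obtain ⟨c₂, e₂, h₂⟩ := exists_hasPathConfig_cycle (k + 1) (by omega)
    refine configurable_figureEight (by omega) (by omega) x h₁ h₂ ?_
    rw [hce]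
    exact subset_union_left.trans subset_union_left
  by_cases hk' : k + 1 ≠ 4 ∧ k + 1 ≠ 7
  · obtain ⟨c₁, e₁, h₁⟩ := exists_hasPathConfig_cycle n hn
    obtain ⟨c₂, e₂, hce, h₂⟩ := exists_cycle_config (k + 1) (by omega) hk'.1 hk'.2
    refine configurable_figureEight (by omega) (by omega) x h₁ h₂ ?_
    rw [← hce]
    intro c
    simp only [mem_union]
    tauto
  -- Neither `C₄` nor `C₇` is configurable, so here both cycles must help at `x`.
  obtain rfl | rfl : n = 4 ∨ n = 7 := by omega
  · obtain rfl : k = 6 := by omega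
    exact configurable_figureEight (by omega) (by omega) x hasPathConfig_cycle_four
      hasPathConfig_cycle_seven (by decide)
  · obtain rfl | rfl : k = 3 ∨ k = 6 := by omega
    · exact configurable_figureEight (by omega) (by omega) x hasPathConfig_cycle_seven
        hasPathConfig_cycle_four (by decide)
    · exact configurable_figureEight (by omega) (by omega) x hasPathConfig_cycle_seven
        hasPathConfig_cycle_seven' (by decide)

instance (x y : ZMod 4) : DecidableRel (cycleAttachPath 4 3 x y).Adj := fun u v =>
  decidable_of_iff' _ (cycleAttachPath_adj_iff (by norm_num) u v)

instance : DecidableRel C4C4.Adj := by unfold C4C4; infer_instance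

instance : DecidableRel Graph1.Adj := by unfold Graph1 cyc7Edges; infer_instance

theorem nonempty_iso_of_bijective {V W : Type*} {G : SimpleGraph V} {H : SimpleGraph W}
    (f : V → W) (hf : Function.Bijective f) (h : ∀ u v, H.Adj (f u) (f v) ↔ G.Adj u v) :
    Nonempty (G ≃g H) :=
  ⟨⟨Equiv.ofBijective f hf, h _ _⟩⟩

theorem nonempty_iso_C4C4 (x : ZMod 4) : Nonempty (cycleAttachPath 4 3 x x ≃g C4C4) := by
  refine nonempty_iso_of_bijective (Sum.elim (fun a => ![0, 1, 2, 3] (a - x)) ![4, 5, 6]) ?_ ?_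
    <;> revert x <;> decide

theorem nonempty_iso_Graph1_add_one (x : ZMod 4) :
    Nonempty (cycleAttachPath 4 3 x (x + 1) ≃g Graph1) := by
  refine nonempty_iso_of_bijective (Sum.elim (fun a => ![5, 2, 3, 4] (a - x)) ![6, 0, 1]) ?_ ?_
    <;> revert x <;> decide

theorem nonempty_iso_Graph1_add_three (x : ZMod 4) :
    Nonempty (cycleAttachPath 4 3 x (x + 3) ≃g Graph1) := by
  refine nonempty_iso_of_bijective (Sum.elim (fun a => ![5, 4, 3, 2] (a - x)) ![6, 0, 1]) ?_ ?_
    <;> revert x <;> decide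

theorem stmt10 (n k : ℕ) (hn : 3 ≤ n) (hk : 3 ≤ k) (x y : ZMod n)
    (h1 : IsEmpty (cycleAttachPath n k x y ≃g C4C4))
    (h2 : IsEmpty (cycleAttachPath n k x y ≃g Graph1)) :
    Configurable (cycleAttachPath n k x y) := by
  have : NeZero n := ⟨by omega⟩
  obtain ⟨d, hdn, rfl⟩ : ∃ d < n, y = x + d := ⟨(y - x).val, ZMod.val_lt _, by simp⟩
  rcases Nat.eq_zero_or_pos d with rfl | hd
  · rw [Nat.cast_zero, add_zero] at h1 ⊢
    refine configurable_cycleAttachPath_self hn hk ?_ x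
    rintro ⟨rfl, rfl⟩
    exact (nonempty_iso_C4C4 x).elim h1.false
  · refine configurable_cycleAttachPath_of_pos hn hk hd hdn ?_ x
    rintro ⟨rfl, rfl, rfl | rfl⟩
    · rw [Nat.cast_one] at h2
      exact (nonempty_iso_Graph1_add_one x).elim h2.false
    · rw [Nat.cast_ofNat] at h2
      exact (nonempty_iso_Graph1_add_three x).elim h2.false
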